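/- Let $n \geq 1$ and let $r \in S_{2n+2}$ be the involution $i \mapsto 2n+3-i$. Then $W_{2n+2}$ is generated by the transpositions $(i\ i+2)$ for $1 \leq i \leq 2n$ together with $r$. -/

import Mathlib

/-- Indices `0,…,2n+1` of `Fin (2n+2)` correspond to the numbers `1,…,2n+2`;
`Bo` is the set corresponding to the odd numbers `1,3,…,2n+1`. -/
def Bo (n : ℕ) : Set (Fin (2*n+2)) := {x | (x : ℕ) % 2 = 0}

/-- `Be` is the set corresponding to the even numbers `2,4,…,2n+2`. -/
def Be (n : ℕ) : Set (Fin (2*n+2)) := {x | (x : ℕ) % 2 = 1}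

/-!
A permutation mapping the odd numbers onto the odd numbers preserves parity, and one mapping them
onto the even numbers becomes parity-preserving after composing with `r`, which reverses parity
because `2n+2` is even. A parity-preserving permutation sends each point into its orbit under the
transpositions `(i i+2)`, since these link all numbers of the same parity; a group generated by
transpositions contains every permutation with this property (`mem_closure_isSwap`).
-/

open Equiv MulAction

def swapsStepTwo (m : ℕ) : Set (Perm (Fin m)) :=
  {τ | ∃ j : ℕ, ∃ h : j + 2 < m, τ = swap ⟨j, by omega⟩ ⟨j + 2, h⟩}

lemma isSwap_of_mem_swapsStepTwo {m : ℕ} {τ : Perm (Fin m)} (hτ : τ ∈ swapsStepTwo m) :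
    τ.IsSwap := by
  obtain ⟨j, h, rfl⟩ := hτ
  exact ⟨_, _, by simp [Fin.ext_iff], rfl⟩

lemma mem_orbit_closure_swapsStepTwo_of_val_eq {m : ℕ} (k : ℕ) {a b : Fin m}
    (hab : (b : ℕ) = a + 2 * k) : b ∈ orbit (Subgroup.closure (swapsStepTwo m)) a := by
  induction k generalizing b with
  | zero => simp [Fin.ext_iff.2 hab]
  | succ k ih =>
    let c : Fin m := ⟨b - 2, by omega⟩
    have hcv : (c : ℕ) = b - 2 := rfl
    have hc : c ∈ orbit (Subgroup.closure (swapsStepTwo m)) a := ih (by omega)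
    have hcb : swap c b ∈ swapsStepTwo m := ⟨c, by omega, by congr; ext; simp; omega⟩
    rw [← orbit_eq_iff.2 hc]
    exact ⟨⟨swap c b, Subgroup.subset_closure hcb⟩, swap_apply_left c b⟩

lemma mem_orbit_closure_swapsStepTwo {m : ℕ} {a b : Fin m} (hab : (a : ℕ) % 2 = b % 2) :
    b ∈ orbit (Subgroup.closure (swapsStepTwo m)) a := by
  rcases le_total (a : ℕ) b with h | h
  · exact mem_orbit_closure_swapsStepTwo_of_val_eq ((b - a) / 2) (by omega)
  · exact mem_orbit_symm.1 (mem_orbit_closure_swapsStepTwo_of_val_eq ((a - b) / 2) (by omega))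

lemma mem_closure_swapsStepTwo {m : ℕ} {σ : Perm (Fin m)} (hσ : ∀ x, (σ x : ℕ) % 2 = x % 2) :
    σ ∈ Subgroup.closure (swapsStepTwo m) :=
  (mem_closure_isSwap fun _ ↦ isSwap_of_mem_swapsStepTwo).2
    ⟨Set.toFinite _, fun x ↦ mem_orbit_closure_swapsStepTwo (hσ x).symm⟩

lemma val_swap_mod_two {m : ℕ} {a b : Fin m} (hab : (a : ℕ) % 2 = b % 2) (x : Fin m) :
    (swap a b x : ℕ) % 2 = x % 2 := by
  rw [swap_apply_def]
  split_ifs with ha hb <;> subst_vars <;> omega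

lemma val_revPerm_mod_two_ne {n : ℕ} (x : Fin (2 * n + 2)) :
    (Fin.revPerm x : ℕ) % 2 ≠ x % 2 := by
  simp only [Fin.revPerm_apply, Fin.val_rev]
  omega

lemma val_mul_mod_two_of_ne {m : ℕ} {σ τ : Perm (Fin m)} (hσ : ∀ x, (σ x : ℕ) % 2 ≠ x % 2)
    (hτ : ∀ x, (τ x : ℕ) % 2 ≠ x % 2) (x : Fin m) : ((σ * τ) x : ℕ) % 2 = x % 2 := by
  have := hσ (τ x)
  have := hτ x
  simp only [Perm.mul_apply]
  omega

lemma image_Bo_eq_Bo_iff {n : ℕ} {σ : Perm (Fin (2 * n + 2))} :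
    σ '' Bo n = Bo n ↔ ∀ x, (σ x : ℕ) % 2 = x % 2 := by
  rw [← Equiv.eq_preimage_iff_image_eq, Set.ext_iff]
  refine forall_congr' fun x ↦ ?_
  simp only [Bo, Set.mem_ofPred_eq, Set.mem_preimage]
  omega

lemma image_Bo_eq_Be_iff {n : ℕ} {σ : Perm (Fin (2 * n + 2))} :
    σ '' Bo n = Be n ↔ ∀ x, (σ x : ℕ) % 2 ≠ x % 2 := by
  rw [← Equiv.eq_preimage_iff_image_eq, Set.ext_iff]
  refine forall_congr' fun x ↦ ?_
  simp only [Bo, Be, Set.mem_ofPred_eq, Set.mem_preimage]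
  omega

theorem stmt8 (n : ℕ)
    (W : Subgroup (Equiv.Perm (Fin (2*n+2))))
    (hW : ∀ σ, σ ∈ W ↔ (⇑σ '' Bo n = Bo n ∨ ⇑σ '' Bo n = Be n)) :
    W = Subgroup.closure
      ({τ | ∃ j : ℕ, ∃ h : j < 2*n,
          τ = Equiv.swap (⟨j, by omega⟩ : Fin (2*n+2)) ⟨j+2, by omega⟩}
        ∪ {(Fin.revPerm : Equiv.Perm (Fin (2*n+2)))}) := by
  have hswaps : {τ | ∃ j : ℕ, ∃ h : j < 2*n,
      τ = Equiv.swap (⟨j, by omega⟩ : Fin (2*n+2)) ⟨j+2, by omega⟩} = swapsStepTwo (2*n+2) := by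
    ext τ
    exact ⟨fun ⟨j, h, hτ⟩ ↦ ⟨j, by omega, hτ⟩, fun ⟨j, h, hτ⟩ ↦ ⟨j, by omega, hτ⟩⟩
  rw [hswaps]
  apply le_antisymm
  · intro σ hσ
    have hsub := Subgroup.closure_mono
      (Set.subset_union_left (s := swapsStepTwo (2*n+2)) (t := {Fin.revPerm}))
    rcases (hW σ).1 hσ with h | h
    · exact hsub (mem_closure_swapsStepTwo (image_Bo_eq_Bo_iff.1 h))
    · have hrevσ : Fin.revPerm * σ ∈ Subgroup.closure (swapsStepTwo (2*n+2)) :=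
        mem_closure_swapsStepTwo (val_mul_mod_two_of_ne val_revPerm_mod_two_ne
          (image_Bo_eq_Be_iff.1 h))
      have hrev : Fin.revPerm ∈ Subgroup.closure (swapsStepTwo (2*n+2) ∪ {Fin.revPerm}) :=
        Subgroup.subset_closure (Or.inr rfl)
      simpa using Subgroup.mul_mem _ (Subgroup.inv_mem _ hrev) (hsub hrevσ)
  · rw [Subgroup.closure_le]
    rintro τ (⟨j, -, rfl⟩ | rfl)
    · exact (hW _).2 (Or.inl (image_Bo_eq_Bo_iff.2 (val_swap_mod_two (by simp))))
    · exact (hW _).2 (Or.inr (image_Bo_eq_Be_iff.2 val_revPerm_mod_two_ne))
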